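/- Let G = (V,E,c) be a precedence graph whose associated inequality system x_i - x_j ≤ c_{ij}, (i,j) ∈ E, is feasible, and assume G has no self-loops. For distinct nodes u, v ∈ V and b ∈ ℝ, the following are equivalent: (a) every x ∈ ℝ^V satisfying all inequalities x_i - x_j ≤ c_{ij} for (i,j) ∈ E also satisfies x_u - x_v ≤ b; (b) there exists a simple path from u to v in G whose weight is at most b. -/

import Mathlib

/-!
Summing the constraints along a walk from `u` to `v` bounds `x u - x v` by its weight. Conversely,
feasibility rules out closed walks of negative weight, so cutting out closed subwalks shortens any
walk to a simple path without increasing its weight, and the minimum weight `d i` of a walk from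
`u` to `i` exists for every `i` reachable from `u`. The potential `-d` satisfies the constraints
among reachable vertices (the triangle inequality `d j ≤ d i + c i j`); a feasible solution shifted
far down on the unreachable vertices completes it to a solution `x`. Then (a) at `x` gives
`d v ≤ b`, while for unreachable `v` the shift makes `x u - x v` arbitrarily large.
-/

/-- `l` is a walk in edge set `E`: a nonempty list of vertices with consecutive edges. -/
def IsWalk {V : Type*} (E : Set (V × V)) (l : List V) : Prop :=
  l ≠ [] ∧ l.Chain' (fun a b => (a, b) ∈ E)

/-- The weight of a walk: sum of edge weights along consecutive pairs (with multiplicity). -/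
def walkWeight {V : Type*} (c : V → V → ℝ) (l : List V) : ℝ :=
  ((l.zip l.tail).map fun p => c p.1 p.2).sum

/-- `l` is a walk from `u` to `v`. -/
def IsWalkFrom {V : Type*} (E : Set (V × V)) (u v : V) (l : List V) : Prop :=
  IsWalk E l ∧ l.head? = some u ∧ l.getLast? = some v

/-- A closed walk: a walk with at least one edge whose first and last vertices agree. -/
def IsClosedWalk {V : Type*} (E : Set (V × V)) (l : List V) : Prop :=
  IsWalk E l ∧ 2 ≤ l.length ∧ l.head? = l.getLast?

/-- A simple path from `u` to `v`: a walk with all traversed vertices distinct. -/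
def IsPathFrom {V : Type*} (E : Set (V × V)) (u v : V) (l : List V) : Prop :=
  IsWalkFrom E u v l ∧ l.Nodup

/-- A cycle: a closed walk all of whose vertices other than the repeated endpoint are distinct. -/
def IsCycle {V : Type*} (E : Set (V × V)) (l : List V) : Prop :=
  IsClosedWalk E l ∧ l.tail.Nodup

/-- `x` satisfies the precedence relation system of `(V, E, c)`. -/
def Satisfies {V : Type*} (E : Set (V × V)) (c : V → V → ℝ) (x : V → ℝ) : Prop :=
  ∀ e ∈ E, x e.1 - x e.2 ≤ c e.1 e.2

/-- `R` is a redundant edge set of `(V, E, c)`: every edge of `R` has a replacement path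
in the reduced graph of no greater weight. -/
def IsRedundantEdgeSet {V : Type*} (E : Set (V × V)) (c : V → V → ℝ)
    (R : Set (V × V)) : Prop :=
  R ⊆ E ∧ ∀ e ∈ R, ∃ l, IsPathFrom (E \ R) e.1 e.2 l ∧ walkWeight c l ≤ c e.1 e.2

/-- `w` is the minimum weight of a walk from `i` to `j` in `(V, E, c)` (attained). -/
def IsMinWalkWeight {V : Type*} (E : Set (V × V)) (c : V → V → ℝ) (i j : V) (w : ℝ) : Prop :=
  (∃ l, IsWalkFrom E i j l ∧ walkWeight c l = w) ∧
  ∀ l, IsWalkFrom E i j l → w ≤ walkWeight c l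

/-- The relation `∼`: `i ∼ j` iff `i = j` or some zero-weight closed walk traverses both. -/
def Sim {V : Type*} (E : Set (V × V)) (c : V → V → ℝ) (i j : V) : Prop :=
  i = j ∨ ∃ l, IsClosedWalk E l ∧ walkWeight c l = 0 ∧ i ∈ l ∧ j ∈ l

open Filter

section
variable {V : Type*} {E : Set (V × V)} {c : V → V → ℝ}

theorem walkWeight_singleton (a : V) : walkWeight c [a] = 0 := rfl

theorem walkWeight_cons_cons (a b : V) (l : List V) :
    walkWeight c (a :: b :: l) = c a b + walkWeight c (b :: l) := by
  simp [walkWeight]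

theorem walkWeight_append_cons (s : List V) (a : V) (t : List V) :
    walkWeight c (s ++ a :: t) = walkWeight c (s ++ [a]) + walkWeight c (a :: t) := by
  induction s using List.twoStepInduction with
  | nil => simp [walkWeight]
  | singleton x => simp [walkWeight]
  | cons_cons x y s _ ih =>
    simp only [List.cons_append, walkWeight_cons_cons] at ih ⊢
    rw [ih, add_assoc]

theorem isWalk_iff {l : List V} : IsWalk E l ↔ l ≠ [] ∧ l.IsChain fun a b => (a, b) ∈ E :=
  Iff.rfl

theorem isWalkFrom_singleton (a : V) : IsWalkFrom E a a [a] :=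
  ⟨⟨List.cons_ne_nil a [], List.isChain_singleton a⟩, rfl, rfl⟩

theorem isWalkFrom_cons_cons {u w a b : V} {l : List V} :
    IsWalkFrom E u w (a :: b :: l) ↔ a = u ∧ (a, b) ∈ E ∧ IsWalkFrom E b w (b :: l) := by
  simp only [IsWalkFrom, isWalk_iff, ne_eq, reduceCtorEq, not_false_eq_true,
    List.isChain_cons_cons, true_and, List.head?_cons, Option.some.injEq, List.getLast?_cons_cons]
  tauto

theorem isWalkFrom_append_cons {u w a : V} {s t : List V} :
    IsWalkFrom E u w (s ++ a :: t) ↔ IsWalkFrom E u a (s ++ [a]) ∧ IsWalkFrom E a w (a :: t) := by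
  have hhead : (s ++ a :: t).head? = (s ++ [a]).head? := by cases s <;> rfl
  simp only [IsWalkFrom, isWalk_iff, List.isChain_split (l₂ := t), hhead,
    List.getLast?_append_cons]
  simp only [ne_eq, List.append_eq_nil_iff, and_false, not_false_eq_true,
    List.cons_ne_nil, true_and]
  tauto

theorem walkWeight_concat {i : V} {p : List V} (hp : p.getLast? = some i) (j : V) :
    walkWeight c (p ++ [j]) = walkWeight c p + c i j := by
  obtain ⟨s, rfl⟩ := List.getLast?_eq_some_iff.mp hp
  rw [List.append_assoc, List.singleton_append, walkWeight_append_cons, walkWeight_cons_cons,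
    walkWeight_singleton, add_zero]

theorem IsWalkFrom.concat {u i j : V} {p : List V} (hp : IsWalkFrom E u i p) (he : (i, j) ∈ E) :
    IsWalkFrom E u j (p ++ [j]) := by
  obtain ⟨s, rfl⟩ := List.getLast?_eq_some_iff.mp hp.2.2
  rw [List.append_assoc, List.singleton_append, isWalkFrom_append_cons]
  exact ⟨hp, isWalkFrom_cons_cons.mpr ⟨rfl, he, isWalkFrom_singleton j⟩⟩

theorem IsWalkFrom.isClosedWalk {a : V} {l : List V} (hl : IsWalkFrom E a a l)
    (h : 2 ≤ l.length) : IsClosedWalk E l :=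
  ⟨hl.1, h, hl.2.1.trans hl.2.2.symm⟩

theorem IsClosedWalk.exists_isWalkFrom {l : List V} (hl : IsClosedWalk E l) :
    ∃ a, IsWalkFrom E a a l := by
  obtain ⟨a, t, rfl⟩ := List.exists_cons_of_ne_nil hl.1.1
  exact ⟨a, hl.1, rfl, hl.2.2.symm⟩

theorem Satisfies.sub_le_walkWeight {x : V → ℝ} (hx : Satisfies E c x) :
    ∀ {a b : V} {l : List V}, IsWalkFrom E a b l → x a - x b ≤ walkWeight c l
  | _, _, [], h => absurd rfl h.1.1
  | _, _, [_], ⟨_, ha, hb⟩ => by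
    cases Option.some.inj ha
    cases Option.some.inj hb
    simp [walkWeight_singleton]
  | _, _, _ :: _ :: _, h => by
    obtain ⟨rfl, he, hl⟩ := isWalkFrom_cons_cons.mp h
    rw [walkWeight_cons_cons]
    linarith [hx _ he, hx.sub_le_walkWeight hl]

theorem Satisfies.walkWeight_nonneg {x : V → ℝ} (hx : Satisfies E c x) {l : List V}
    (hl : IsClosedWalk E l) : 0 ≤ walkWeight c l := by
  obtain ⟨a, ha⟩ := hl.exists_isWalkFrom
  simpa using hx.sub_le_walkWeight ha

theorem exists_eq_append_cons_append_cons_of_not_nodup :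
    ∀ {l : List V}, ¬ l.Nodup → ∃ a l₁ l₂ l₃, l = l₁ ++ a :: (l₂ ++ a :: l₃)
  | [], h => absurd List.nodup_nil h
  | x :: t, h => by
    by_cases hx : x ∈ t
    · obtain ⟨s, t', rfl⟩ := List.append_of_mem hx
      exact ⟨x, [], s, t', rfl⟩
    · obtain ⟨a, l₁, l₂, l₃, rfl⟩ :=
        exists_eq_append_cons_append_cons_of_not_nodup (by simpa [hx] using h)
      exact ⟨a, x :: l₁, l₂, l₃, rfl⟩

theorem exists_isPathFrom_walkWeight_le (hc : ∀ l, IsClosedWalk E l → 0 ≤ walkWeight c l)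
    {u v : V} {l : List V} (hl : IsWalkFrom E u v l) :
    ∃ p, IsPathFrom E u v p ∧ walkWeight c p ≤ walkWeight c l := by
  induction hn : l.length using Nat.strong_induction_on generalizing l with
  | _ n ih =>
    by_cases hnd : l.Nodup
    · exact ⟨l, ⟨hl, hnd⟩, le_rfl⟩
    obtain ⟨a, l₁, l₂, l₃, rfl⟩ := exists_eq_append_cons_append_cons_of_not_nodup hnd
    obtain ⟨h₁, h₂⟩ := isWalkFrom_append_cons.mp hl
    rw [← List.cons_append] at h₂
    obtain ⟨hcyc, h₃⟩ := isWalkFrom_append_cons.mp h₂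
    obtain ⟨p, hp, hpw⟩ :=
      ih _ (by simp [← hn]) (isWalkFrom_append_cons.mpr ⟨h₁, h₃⟩) rfl
    have hcyc_nonneg := hc _ (hcyc.isClosedWalk (by simp))
    have hsplit := walkWeight_append_cons (c := c) (a :: l₂) a l₃
    rw [List.cons_append] at hsplit
    refine ⟨p, hp, ?_⟩
    rw [walkWeight_append_cons] at hpw ⊢
    linarith

theorem finite_setOf_isPathFrom [Finite V] (u v : V) : {p | IsPathFrom E u v p}.Finite := by
  have := Fintype.ofFinite V
  exact (Set.finite_range (Subtype.val : {l : List V // l.Nodup} → List V)).subset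
    fun p hp => ⟨⟨p, hp.2⟩, rfl⟩

theorem exists_isMinWalkWeight [Finite V] (hc : ∀ l, IsClosedWalk E l → 0 ≤ walkWeight c l)
    {u v : V} {l : List V} (hl : IsWalkFrom E u v l) : ∃ w, IsMinWalkWeight E c u v w := by
  obtain ⟨p, hp, -⟩ := exists_isPathFrom_walkWeight_le hc hl
  obtain ⟨q, hq, hmin⟩ :=
    Set.exists_min_image _ (walkWeight c) (finite_setOf_isPathFrom u v) ⟨p, hp⟩
  refine ⟨walkWeight c q, ⟨q, hq.1, rfl⟩, fun l hl => ?_⟩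
  obtain ⟨p', hp', hle⟩ := exists_isPathFrom_walkWeight_le hc hl
  exact (hmin p' hp').trans hle

theorem IsMinWalkWeight.le_add {u i j : V} {dᵢ dⱼ : ℝ} (hi : IsMinWalkWeight E c u i dᵢ)
    (hj : IsMinWalkWeight E c u j dⱼ) (he : (i, j) ∈ E) : dⱼ ≤ dᵢ + c i j := by
  obtain ⟨⟨p, hp, rfl⟩, -⟩ := hi
  exact walkWeight_concat hp.2.2 j ▸ hj.2 _ (hp.concat he)

theorem Satisfies.eventually_piecewise [Finite V] {R : Set V} [DecidablePred (· ∈ R)]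
    {y z : V → ℝ} (hy : Satisfies E c y) (hR : ∀ i j, (i, j) ∈ E → i ∈ R → j ∈ R)
    (hz : ∀ i j, (i, j) ∈ E → i ∈ R → z i - z j ≤ c i j) :
    ∀ᶠ t in atBot, Satisfies E c (R.piecewise z fun i => y i + t) := by
  suffices ∀ e : V × V, ∀ᶠ t in atBot,
      e ∈ E → R.piecewise z (fun i => y i + t) e.1 - R.piecewise z (fun i => y i + t) e.2 ≤
        c e.1 e.2 from eventually_all.mpr this
  rintro ⟨i, j⟩
  by_cases hi : i ∈ R
  · exact .of_forall fun t he => by simpa [hi, hR i j he hi] using hz i j he hi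
  by_cases hj : j ∈ R
  · filter_upwards [eventually_le_atBot (c i j - y i + z j)] with t ht he
    simp only [Set.piecewise_eq_of_mem _ _ _ hj, Set.piecewise_eq_of_notMem _ _ _ hi]
    linarith
  · exact .of_forall fun t he => by simpa [hi, hj] using hy _ he

end

theorem stmt3_general {V : Type*} [Fintype V] (E : Set (V × V)) (c : V → V → ℝ)
    (hfeas : ∃ x : V → ℝ, Satisfies E c x)
    (u v : V) (b : ℝ) :
    (∀ x : V → ℝ, Satisfies E c x → x u - x v ≤ b) ↔
      (∃ p : List V, IsPathFrom E u v p ∧ walkWeight c p ≤ b) := by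
  classical
  refine ⟨fun h => ?_, fun ⟨p, hp, hpb⟩ x hx => (hx.sub_le_walkWeight hp.1).trans hpb⟩
  obtain ⟨y, hy⟩ := hfeas
  have hc : ∀ l, IsClosedWalk E l → 0 ≤ walkWeight c l := fun _ => hy.walkWeight_nonneg
  set R := {i | ∃ l, IsWalkFrom E u i l}
  have hR : ∀ i j, (i, j) ∈ E → i ∈ R → j ∈ R := fun _ _ he ⟨_, hp⟩ => ⟨_, hp.concat he⟩
  choose! d hd using fun i (hi : i ∈ R) => exists_isMinWalkWeight hc hi.choose_spec
  have hu : u ∈ R := ⟨[u], isWalkFrom_singleton u⟩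
  have hdu : d u ≤ 0 := (hd u hu).2 [u] (isWalkFrom_singleton u)
  have hsol := hy.eventually_piecewise hR (z := fun i => -d i) fun i j he hi => by
    linarith [(hd i hi).le_add (hd j (hR i j he hi)) he]
  by_cases hv : v ∈ R
  · obtain ⟨t, ht⟩ := hsol.exists
    obtain ⟨⟨l, hl, hlv⟩, -⟩ := hd v hv
    obtain ⟨p, hp, hpl⟩ := exists_isPathFrom_walkWeight_le hc hl
    have hb := h _ ht
    simp only [Set.piecewise_eq_of_mem _ _ _ hu, Set.piecewise_eq_of_mem _ _ _ hv] at hb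
    exact ⟨p, hp, by linarith⟩
  · obtain ⟨t, ht, htb⟩ := (hsol.and (eventually_lt_atBot (-d u - y v - b))).exists
    have hb := h _ ht
    simp only [Set.piecewise_eq_of_mem _ _ _ hu, Set.piecewise_eq_of_notMem _ _ _ hv] at hb
    linarith

theorem stmt3 {V : Type*} [Fintype V] (E : Set (V × V)) (c : V → V → ℝ)
    (hfeas : ∃ x : V → ℝ, Satisfies E c x)
    (hloop : ∀ i : V, (i, i) ∉ E)
    (u v : V) (huv : u ≠ v) (b : ℝ) :
    (∀ x : V → ℝ, Satisfies E c x → x u - x v ≤ b) ↔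
      (∃ p : List V, IsPathFrom E u v p ∧ walkWeight c p ≤ b) :=
  stmt3_general E c hfeas u v b
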